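/- arXiv:2303.05842 — 4 statements merged into one kernel-verified Lean document; each statement's English description precedes it below -/
import Mathlib

section
/- The cohesive energy density Φ is nonnegative, bounded, and continuous on the whole of [0,∞)². More precisely, 0 ≤ Φ(y,z) ≤ sup_{s≥0} ψ(s) for all (y,z) ∈ [0,∞)². -/
set_option autoImplicit false

open Set Filter Topology

/-!
The tangent of the concave function `ψ` at `z` lies above `ψ(0) = 0`, so `0 ≤ z ψ'(z) ≤ ψ(z)`.
For `y < z` this gives `ψ(z)/2 ≤ Φ(y,z) ≤ ψ(z)`, hence `0 ≤ Φ(y,z) ≤ ψ(max y z) ≤ sup ψ` everywhere.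
Away from the origin `Φ` is continuous because its two branches are continuous on their closed
regions and agree on the diagonal; at the origin the bounds squeeze `Φ` between `0` and
`ψ(max y z) → ψ(0) = 0`.
-/

lemma ConcaveOn.sub_mul_le_sub_of_hasDerivWithinAt {S : Set ℝ} {f : ℝ → ℝ} {f' x y : ℝ}
    (hfc : ConcaveOn ℝ S f) (hx : x ∈ S) (hy : y ∈ S) (hxy : x ≤ y)
    (hf' : HasDerivWithinAt f f' S y) : (y - x) * f' ≤ f y - f x := by
  rcases hxy.eq_or_lt with rfl | hlt
  · simp
  · have h := hfc.le_slope_of_hasDerivWithinAt hx hy hlt hf'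
    rw [slope_def_field, le_div_iff₀ (sub_pos.2 hlt)] at h
    linarith

/-- `Φ(y, z)`, with `ψd` in the role of `ψ'`. -/
noncomputable def cohesiveEnergy (ψ ψd : ℝ → ℝ) (p : ℝ × ℝ) : ℝ :=
  if p.1 < p.2 then ψd p.2 / (2 * p.2) * p.1 ^ 2 + ψ p.2 - p.2 * ψd p.2 / 2 else ψ p.1

section cohesiveEnergy

variable {ψ ψd : ℝ → ℝ}

lemma cohesiveEnergy_nonneg {y z : ℝ} (hy : 0 ≤ y) (hψy : 0 ≤ ψ y) (hψdz : 0 ≤ ψd z)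
    (htan : z * ψd z ≤ ψ z) : 0 ≤ cohesiveEnergy ψ ψd (y, z) := by
  unfold cohesiveEnergy
  split_ifs with hyz
  · have hz : 0 < z := hy.trans_lt hyz
    have : 0 ≤ ψd z / (2 * z) * y ^ 2 := by positivity
    nlinarith
  · exact hψy

lemma cohesiveEnergy_le_max {y z : ℝ} (hy : 0 ≤ y) (hψdz : 0 ≤ ψd z) :
    cohesiveEnergy ψ ψd (y, z) ≤ ψ (max y z) := by
  unfold cohesiveEnergy
  split_ifs with hyz
  · have hz : 0 < z := hy.trans_lt hyz
    have hyz2 : y ^ 2 ≤ z ^ 2 := pow_le_pow_left₀ hy hyz.le 2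
    have : ψd z / (2 * z) * y ^ 2 ≤ z * ψd z / 2 :=
      calc ψd z / (2 * z) * y ^ 2 ≤ ψd z / (2 * z) * z ^ 2 := by gcongr
        _ = z * ψd z / 2 := by field_simp
    rw [max_eq_right hyz.le]
    linarith
  · rw [max_eq_left (not_lt.1 hyz)]

lemma cohesiveEnergy_diag_of_ne_zero {z : ℝ} (hz : z ≠ 0) :
    ψd z / (2 * z) * z ^ 2 + ψ z - z * ψd z / 2 = ψ z := by
  rw [show ψd z / (2 * z) * z ^ 2 = z * ψd z / 2 by field_simp [hz]]
  ring

lemma continuousOn_cohesiveEnergy_diff_zero (hψ : ContinuousOn ψ (Ici (0:ℝ)))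
    (hψd : ContinuousOn ψd (Ioi (0:ℝ))) :
    ContinuousOn (cohesiveEnergy ψ ψd) ((Ici (0:ℝ) ×ˢ Ici (0:ℝ)) \ {0}) := by
  have hle : closure {p : ℝ × ℝ | p.1 < p.2} ⊆ {p | p.1 ≤ p.2} :=
    closure_lt_subset_le continuous_fst continuous_snd
  apply ContinuousOn.if
  · rintro ⟨y, z⟩ ⟨⟨-, hne⟩, hfr⟩
    obtain rfl : y = z := frontier_lt_subset_eq continuous_fst continuous_snd hfr
    have hy : y ≠ 0 := fun h => hne (by simp [h])
    exact cohesiveEnergy_diag_of_ne_zero hy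
  · have hsnd : MapsTo Prod.snd
        ((Ici (0:ℝ) ×ˢ Ici (0:ℝ)) \ {0} ∩ closure {p : ℝ × ℝ | p.1 < p.2}) (Ioi 0) := by
      rintro ⟨y, z⟩ ⟨⟨⟨hy, -⟩, hne⟩, hcl⟩
      have hyz : y ≤ z := hle hcl
      have hy : 0 ≤ y := hy
      refine (hy.trans hyz).lt_of_ne fun h => hne ?_
      obtain rfl : z = 0 := h.symm
      obtain rfl : y = 0 := le_antisymm hyz hy
      rfl
    have hψd' := hψd.comp continuous_snd.continuousOn hsnd
    have hψ' : ContinuousOn (fun p : ℝ × ℝ => ψ p.2) (Ici (0:ℝ) ×ˢ Ici (0:ℝ)) :=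
      hψ.comp continuous_snd.continuousOn mapsTo_snd_prod
    refine (((hψd'.div (continuousOn_const.mul continuous_snd.continuousOn) ?_).mul
      (continuous_fst.pow 2).continuousOn).add
      (hψ'.mono (inter_subset_left.trans sdiff_subset))).sub
        ((continuous_snd.continuousOn.mul hψd').div_const 2)
    intro p hp
    exact mul_ne_zero two_ne_zero (hsnd hp).ne'
  · exact (hψ.comp continuous_fst.continuousOn mapsTo_fst_prod).mono
      (inter_subset_left.trans sdiff_subset)

lemma continuousWithinAt_cohesiveEnergy_zero (hψ : ContinuousOn ψ (Ici (0:ℝ))) (hψ0 : ψ 0 = 0)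
    (hbound : ∀ p ∈ Ici (0:ℝ) ×ˢ Ici (0:ℝ),
      0 ≤ cohesiveEnergy ψ ψd p ∧ cohesiveEnergy ψ ψd p ≤ ψ (max p.1 p.2)) :
    ContinuousWithinAt (cohesiveEnergy ψ ψd) (Ici (0:ℝ) ×ˢ Ici (0:ℝ)) 0 := by
  have hmax : ContinuousWithinAt (fun p : ℝ × ℝ => ψ (max p.1 p.2))
      (Ici (0:ℝ) ×ˢ Ici (0:ℝ)) 0 :=
    (hψ 0 self_mem_Ici).comp_of_eq (continuous_fst.max continuous_snd).continuousWithinAt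
      (fun p hp => le_max_of_le_left (mem_Ici.1 (mapsTo_fst_prod hp))) (by simp)
  have hupper : Tendsto (fun p : ℝ × ℝ => ψ (max p.1 p.2))
      (𝓝[Ici (0:ℝ) ×ˢ Ici (0:ℝ)] 0) (𝓝 0) := by
    simpa [ContinuousWithinAt, hψ0] using hmax
  rw [ContinuousWithinAt, (by simp [cohesiveEnergy, hψ0] : cohesiveEnergy ψ ψd 0 = 0)]
  refine tendsto_of_tendsto_of_tendsto_of_le_of_le' tendsto_const_nhds hupper ?_ ?_ <;>
    filter_upwards [self_mem_nhdsWithin] with p hp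
  exacts [(hbound p hp).1, (hbound p hp).2]

lemma continuousOn_cohesiveEnergy (hψ : ContinuousOn ψ (Ici (0:ℝ)))
    (hψd : ContinuousOn ψd (Ioi (0:ℝ))) (hψ0 : ψ 0 = 0)
    (hbound : ∀ p ∈ Ici (0:ℝ) ×ˢ Ici (0:ℝ),
      0 ≤ cohesiveEnergy ψ ψd p ∧ cohesiveEnergy ψ ψd p ≤ ψ (max p.1 p.2)) :
    ContinuousOn (cohesiveEnergy ψ ψd) (Ici (0:ℝ) ×ˢ Ici (0:ℝ)) := by
  intro p hp
  rcases eq_or_ne p 0 with rfl | hp0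
  · exact continuousWithinAt_cohesiveEnergy_zero hψ hψ0 hbound
  · rw [← continuousWithinAt_sdiff_singleton (y := 0)]
    exact continuousOn_cohesiveEnergy_diff_zero hψ hψd p ⟨hp, hp0⟩

end cohesiveEnergy

theorem stmt_0_general (ψ ψd ψdd : ℝ → ℝ)
    (hψmap : ∀ z ∈ Ici (0:ℝ), 0 ≤ ψ z)
    (hmono : StrictMonoOn ψ (Ici (0:ℝ)))
    (hbdd : BddAbove (ψ '' Ici (0:ℝ)))
    (hconc : ConcaveOn ℝ (Ici (0:ℝ)) ψ)
    (hd1 : ∀ z ∈ Ici (0:ℝ), HasDerivWithinAt ψ (ψd z) (Ici (0:ℝ)) z)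
    (hd2 : ∀ z ∈ Ici (0:ℝ), HasDerivWithinAt ψd (ψdd z) (Ici (0:ℝ)) z)
    (hψ0 : ψ 0 = 0)
    (Φ : ℝ → ℝ → ℝ)
    (hΦ : ∀ y ∈ Ici (0:ℝ), ∀ z ∈ Ici (0:ℝ),
      Φ y z = if y < z then ψd z / (2*z) * y^2 + ψ z - z * ψd z / 2 else ψ y) :
    (∀ y ∈ Ici (0:ℝ), ∀ z ∈ Ici (0:ℝ),
        0 ≤ Φ y z ∧ Φ y z ≤ sSup (ψ '' Ici (0:ℝ))) ∧
    ContinuousOn (Function.uncurry Φ) (Ici (0:ℝ) ×ˢ Ici (0:ℝ)) := by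
  have hψd : ∀ z ∈ Ici (0:ℝ), 0 ≤ ψd z := fun z hz =>
    (hd1 z hz).derivWithin (uniqueDiffOn_Ici 0 z hz) ▸ hmono.monotoneOn.derivWithin_nonneg
  have htan : ∀ z ∈ Ici (0:ℝ), z * ψd z ≤ ψ z := fun z hz => by
    simpa [hψ0] using hconc.sub_mul_le_sub_of_hasDerivWithinAt self_mem_Ici hz hz (hd1 z hz)
  have hbound : ∀ p ∈ Ici (0:ℝ) ×ˢ Ici (0:ℝ),
      0 ≤ cohesiveEnergy ψ ψd p ∧ cohesiveEnergy ψ ψd p ≤ ψ (max p.1 p.2) :=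
    fun ⟨y, z⟩ ⟨hy, hz⟩ => ⟨cohesiveEnergy_nonneg hy (hψmap y hy) (hψd z hz) (htan z hz),
      cohesiveEnergy_le_max hy (hψd z hz)⟩
  have hΦeq : EqOn (Function.uncurry Φ) (cohesiveEnergy ψ ψd) (Ici (0:ℝ) ×ˢ Ici (0:ℝ)) :=
    fun ⟨y, z⟩ ⟨hy, hz⟩ => hΦ y hy z hz
  refine ⟨fun y hy z hz => ?_, ?_⟩
  · obtain ⟨h0, hmax⟩ := hbound (y, z) ⟨hy, hz⟩
    rw [← hΦeq ⟨hy, hz⟩] at h0 hmax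
    exact ⟨h0, hmax.trans (le_csSup hbdd (mem_image_of_mem ψ (le_max_of_le_left (mem_Ici.1 hy))))⟩
  · refine (continuousOn_cohesiveEnergy (fun z hz => (hd1 z hz).continuousWithinAt)
      (fun z hz => ?_) hψ0 hbound).congr hΦeq
    exact ((hd2 z (mem_Ici_of_Ioi hz)).continuousWithinAt).mono Ioi_subset_Ici_self

/-- The cohesive energy density `Φ` is nonnegative, bounded and continuous
on `[0,∞)²`; more precisely `0 ≤ Φ y z ≤ sup_{s ≥ 0} ψ s`. -/
theorem stmt_0 (ψ ψd ψdd : ℝ → ℝ) (lam : ℝ) (hlam : 0 < lam)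
    (hψmap : ∀ z ∈ Ici (0:ℝ), 0 ≤ ψ z)
    (hmono : StrictMonoOn ψ (Ici (0:ℝ)))
    (hbdd : BddAbove (ψ '' Ici (0:ℝ)))
    (hconc : ConcaveOn ℝ (Ici (0:ℝ)) ψ)
    (hd1 : ∀ z ∈ Ici (0:ℝ), HasDerivWithinAt ψ (ψd z) (Ici (0:ℝ)) z)
    (hd2 : ∀ z ∈ Ici (0:ℝ), HasDerivWithinAt ψd (ψdd z) (Ici (0:ℝ)) z)
    (hd2cont : ContinuousOn ψdd (Ici (0:ℝ)))
    (hψ0 : ψ 0 = 0) (hψd0 : 0 < ψd 0)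
    (hlow : ∀ z ∈ Ici (0:ℝ), -lam ≤ ψdd z)
    (Φ : ℝ → ℝ → ℝ)
    (hΦ : ∀ y ∈ Ici (0:ℝ), ∀ z ∈ Ici (0:ℝ),
      Φ y z = if y < z then ψd z / (2*z) * y^2 + ψ z - z * ψd z / 2 else ψ y) :
    (∀ y ∈ Ici (0:ℝ), ∀ z ∈ Ici (0:ℝ),
        0 ≤ Φ y z ∧ Φ y z ≤ sSup (ψ '' Ici (0:ℝ))) ∧
    ContinuousOn (Function.uncurry Φ) (Ici (0:ℝ) ×ˢ Ici (0:ℝ)) :=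
  stmt_0_general ψ ψd ψdd hψmap hmono hbdd hconc hd1 hd2 hψ0 Φ hΦ
end

section
/- The regularized function ψ_ε is of class C¹ on [0,∞) with ψ_ε'(z) = min(z/ε, ψ'(z)) for all z ≥ 0; moreover ψ_ε is nondecreasing, bounded, Lipschitz continuous with Lipschitz constant ψ'(0) (independent of ε), and satisfies ψ_ε'(0) = 0 = ψ_ε(0). -/
set_option autoImplicit false

open Set

/-!
On `[0, zε]` the derivative of `ψ_ε` is `z/ε` and on `[zε, ∞)` it is `ψ'`. Since `ψ'` is
antitone (concavity) and the line `z ↦ z/ε` crosses it at the fixed point `zε`, the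
derivative is `min(z/ε, ψ'(z))` on both pieces, and the two one-sided derivatives agree at
`zε`. This derivative lies between `0` and `ψ'(0)`, which gives monotonicity and the
Lipschitz bound by the mean value theorem.
-/

theorem ConcaveOn.antitoneOn_of_hasDerivWithinAt {S : Set ℝ} {f f' : ℝ → ℝ}
    (hf : ConcaveOn ℝ S f) (hd : ∀ x ∈ S, HasDerivWithinAt f (f' x) S x) :
    AntitoneOn f' S := by
  intro x hx y hy hxy
  rcases hxy.eq_or_lt with rfl | hlt
  · rfl
  exact (hf.le_slope_of_hasDerivWithinAt hx hy hlt (hd y hy)).trans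
    (hf.slope_le_of_hasDerivWithinAt hx hy hlt (hd x hx))

theorem IsClosed.hasDerivWithinAt_of_eqOn {s : Set ℝ} {f g : ℝ → ℝ} {g' x : ℝ}
    (hs : IsClosed s) (hg : x ∈ s → HasDerivWithinAt g g' s x) (hfg : EqOn f g s) :
    HasDerivWithinAt f g' s x := by
  by_cases hx : x ∈ s
  · exact (hg hx).congr hfg (hfg hx)
  · exact HasFDerivWithinAt.of_notMem_closure (by rwa [hs.closure_eq])

theorem monotoneOn_of_forall_hasDerivWithinAt_nonneg {D : Set ℝ} (hD : Convex ℝ D)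
    {f f' : ℝ → ℝ} (hf : ∀ x ∈ D, HasDerivWithinAt f (f' x) D x)
    (hf' : ∀ x ∈ D, 0 ≤ f' x) : MonotoneOn f D :=
  monotoneOn_of_hasDerivWithinAt_nonneg hD (fun x hx => (hf x hx).continuousWithinAt)
    (fun x hx => (hf x (interior_subset hx)).mono interior_subset)
    (fun x hx => hf' x (interior_subset hx))

section Crossing

variable {g : ℝ → ℝ} {ε c z : ℝ}

theorem min_div_eq_left_of_le_crossing (hg : AntitoneOn g (Ici 0)) (hε : 0 < ε)
    (hc : ε * g c = c) (hz : 0 ≤ z) (hzc : z ≤ c) : min (z / ε) (g z) = z / ε := by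
  refine min_eq_left ((div_le_iff₀' hε).2 ?_)
  calc z ≤ c := hzc
    _ = ε * g c := hc.symm
    _ ≤ ε * g z := by gcongr; exact hg hz (hz.trans hzc) hzc

theorem min_div_eq_right_of_crossing_le (hg : AntitoneOn g (Ici 0)) (hε : 0 < ε)
    (hc : ε * g c = c) (hc0 : 0 ≤ c) (hcz : c ≤ z) : min (z / ε) (g z) = g z := by
  refine min_eq_right ((le_div_iff₀' hε).2 ?_)
  calc ε * g z ≤ ε * g c := by gcongr; exact hg hc0 (hc0.trans hcz) hcz
    _ = c := hc
    _ ≤ z := hcz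

end Crossing

section Regularization

variable {ψ ψd ψε : ℝ → ℝ} {ε zε : ℝ}

theorem hasDerivWithinAt_regularization (hconc : ConcaveOn ℝ (Ici 0) ψ)
    (hd1 : ∀ z ∈ Ici (0:ℝ), HasDerivWithinAt ψ (ψd z) (Ici 0) z) (hε : 0 < ε)
    (hzε : 0 ≤ zε) (hfix : ε * ψd zε = zε)
    (hψε : ∀ z ∈ Ici (0:ℝ),
      ψε z = if z ≤ zε then z^2 / (2*ε) else ψ z - ψ zε + zε^2 / (2*ε))
    {z : ℝ} (hz : z ∈ Ici (0:ℝ)) :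
    HasDerivWithinAt ψε (min (z / ε) (ψd z)) (Ici 0) z := by
  have hanti := hconc.antitoneOn_of_hasDerivWithinAt hd1
  rw [← Icc_union_Ici_eq_Ici hzε]
  refine HasDerivWithinAt.union ?_ ?_
  · refine isClosed_Icc.hasDerivWithinAt_of_eqOn (g := fun w => w^2 / (2*ε))
      (fun hz' => ?_) (fun w hw => ?_)
    · rw [min_div_eq_left_of_le_crossing hanti hε hfix hz hz'.2]
      exact ((hasDerivAt_pow 2 z).div_const _).hasDerivWithinAt.congr_deriv (by ring)
    · simp [hψε w hw.1, hw.2]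
  · refine isClosed_Ici.hasDerivWithinAt_of_eqOn
      (g := fun w => ψ w - ψ zε + zε^2 / (2*ε)) (fun hz' => ?_) (fun w hw => ?_)
    · rw [min_div_eq_right_of_crossing_le hanti hε hfix hzε hz']
      exact (((hd1 z hz).mono (Ici_subset_Ici.2 hzε)).sub_const _).add_const _
    · rw [hψε w (hzε.trans hw)]
      split_ifs with h
      · rw [le_antisymm h hw]; ring
      · rfl

theorem bddAbove_regularization (hbdd : BddAbove (ψ '' Ici 0)) (hε : 0 < ε) (hzε : 0 ≤ zε)
    (hψε : ∀ z ∈ Ici (0:ℝ),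
      ψε z = if z ≤ zε then z^2 / (2*ε) else ψ z - ψ zε + zε^2 / (2*ε)) :
    BddAbove (ψε '' Ici 0) := by
  obtain ⟨M, hM⟩ := hbdd
  have hψM : ∀ z ∈ Ici (0:ℝ), ψ z ≤ M := fun z hz => hM (mem_image_of_mem ψ hz)
  refine ⟨M - ψ zε + zε^2 / (2*ε), ?_⟩
  rintro _ ⟨z, hz, rfl⟩
  rw [hψε z hz]
  split_ifs with h
  · have : z^2 / (2*ε) ≤ zε^2 / (2*ε) := by gcongr
    linarith [hψM zε hzε]
  · linarith [hψM z hz]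

end Regularization

theorem stmt_10_general (ψ ψd ψdd : ℝ → ℝ)
    (hmono : StrictMonoOn ψ (Ici (0:ℝ)))
    (hbdd : BddAbove (ψ '' Ici (0:ℝ)))
    (hconc : ConcaveOn ℝ (Ici (0:ℝ)) ψ)
    (hd1 : ∀ z ∈ Ici (0:ℝ), HasDerivWithinAt ψ (ψd z) (Ici (0:ℝ)) z)
    (hd2 : ∀ z ∈ Ici (0:ℝ), HasDerivWithinAt ψd (ψdd z) (Ici (0:ℝ)) z)
    (ε : ℝ) (hε : 0 < ε) (zε : ℝ) (hzε : 0 < zε)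
    (hfix : ε * ψd zε = zε)
    (ψε : ℝ → ℝ)
    (hψε : ∀ z ∈ Ici (0:ℝ),
      ψε z = if z ≤ zε then z^2 / (2*ε) else ψ z - ψ zε + zε^2 / (2*ε)) :
    ∃ ψεd : ℝ → ℝ,
      (∀ z ∈ Ici (0:ℝ), HasDerivWithinAt ψε (ψεd z) (Ici (0:ℝ)) z) ∧
      (∀ z ∈ Ici (0:ℝ), ψεd z = min (z / ε) (ψd z)) ∧
      ContinuousOn ψεd (Ici (0:ℝ)) ∧
      MonotoneOn ψε (Ici (0:ℝ)) ∧
      BddAbove (ψε '' Ici (0:ℝ)) ∧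
      LipschitzOnWith (Real.toNNReal (ψd 0)) ψε (Ici (0:ℝ)) ∧
      ψεd 0 = 0 ∧ ψε 0 = 0 := by
  have hanti := hconc.antitoneOn_of_hasDerivWithinAt hd1
  have hψd_nonneg : ∀ z ∈ Ici (0:ℝ), 0 ≤ ψd z := fun z hz =>
    (hd1 z hz).nonneg_of_monotoneOn (uniqueDiffOn_Ici 0 z hz).accPt hmono.monotoneOn
  have hderiv := fun z (hz : z ∈ Ici (0:ℝ)) =>
    hasDerivWithinAt_regularization hconc hd1 hε hzε.le hfix hψε hz
  have hψεd_nonneg : ∀ z ∈ Ici (0:ℝ), 0 ≤ min (z / ε) (ψd z) := fun z hz =>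
    le_min (div_nonneg hz hε.le) (hψd_nonneg z hz)
  refine ⟨fun z => min (z / ε) (ψd z), hderiv, fun _ _ => rfl, ?_,
    monotoneOn_of_forall_hasDerivWithinAt_nonneg (convex_Ici 0) hderiv hψεd_nonneg,
    bddAbove_regularization hbdd hε hzε.le hψε, ?_, by simp [hψd_nonneg 0 self_mem_Ici],
    by simp [hψε 0 self_mem_Ici, hzε.le]⟩
  · exact ContinuousOn.inf (continuous_id.div_const ε).continuousOn
      fun z hz => (hd2 z hz).continuousWithinAt
  · refine (convex_Ici 0).lipschitzOnWith_of_nnnorm_hasDerivWithin_le hderiv fun z hz => ?_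
    rw [← NNReal.coe_le_coe, coe_nnnorm, Real.norm_of_nonneg (hψεd_nonneg z hz),
      Real.coe_toNNReal _ (hψd_nonneg 0 self_mem_Ici)]
    exact (min_le_right _ _).trans (hanti self_mem_Ici hz hz)

/-- the regularized function `ψ_ε` is `C¹` on `[0,∞)` with
`ψ_ε'(z) = min(z/ε, ψ'(z))`; it is nondecreasing, bounded, Lipschitz with constant
`ψ'(0)`, and `ψ_ε'(0) = 0 = ψ_ε(0)`. -/
theorem stmt_10 (ψ ψd ψdd : ℝ → ℝ) (lam : ℝ) (hlam : 0 < lam)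
    (hψmap : ∀ z ∈ Ici (0:ℝ), 0 ≤ ψ z)
    (hmono : StrictMonoOn ψ (Ici (0:ℝ)))
    (hbdd : BddAbove (ψ '' Ici (0:ℝ)))
    (hconc : ConcaveOn ℝ (Ici (0:ℝ)) ψ)
    (hd1 : ∀ z ∈ Ici (0:ℝ), HasDerivWithinAt ψ (ψd z) (Ici (0:ℝ)) z)
    (hd2 : ∀ z ∈ Ici (0:ℝ), HasDerivWithinAt ψd (ψdd z) (Ici (0:ℝ)) z)
    (hd2cont : ContinuousOn ψdd (Ici (0:ℝ)))
    (hψ0 : ψ 0 = 0) (hψd0 : 0 < ψd 0)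
    (hlow : ∀ z ∈ Ici (0:ℝ), -lam ≤ ψdd z)
    (ε : ℝ) (hε : 0 < ε) (zε : ℝ) (hzε : 0 < zε)
    (hfix : ε * ψd zε = zε)
    (huniq : ∀ z : ℝ, 0 ≤ z → ε * ψd z = z → z = zε)
    (ψε : ℝ → ℝ)
    (hψε : ∀ z ∈ Ici (0:ℝ),
      ψε z = if z ≤ zε then z^2 / (2*ε) else ψ z - ψ zε + zε^2 / (2*ε)) :
    ∃ ψεd : ℝ → ℝ,
      (∀ z ∈ Ici (0:ℝ), HasDerivWithinAt ψε (ψεd z) (Ici (0:ℝ)) z) ∧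
      (∀ z ∈ Ici (0:ℝ), ψεd z = min (z / ε) (ψd z)) ∧
      ContinuousOn ψεd (Ici (0:ℝ)) ∧
      MonotoneOn ψε (Ici (0:ℝ)) ∧
      BddAbove (ψε '' Ici (0:ℝ)) ∧
      LipschitzOnWith (Real.toNNReal (ψd 0)) ψε (Ici (0:ℝ)) ∧
      ψεd 0 = 0 ∧ ψε 0 = 0 :=
  stmt_10_general ψ ψd ψdd hmono hbdd hconc hd1 hd2 ε hε zε hzε hfix ψε hψε
end

section
/- The regularized functions ψ_ε converge to ψ uniformly on [0,∞) as ε → 0⁺, i.e. sup_{z ≥ 0} |ψ_ε(z) − ψ(z)| → 0 as ε → 0⁺. -/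
/-!
Write `c = ψ'(0)`. Concavity gives `ψ z ≤ c z` and `ψ' ≤ c` on `[0,∞)`, so the junction
point `z_ε = ε ψ'(z_ε)` is at most `ε c`. On `[0, z_ε]` both `ψ` and `z²/(2ε)` then lie in
`[0, ε c²]`, and beyond `z_ε` the difference `ψ_ε - ψ` is constant, equal to its value at `z_ε`.
Hence `sup |ψ_ε - ψ| ≤ ε c² → 0`.
-/

set_option autoImplicit false

open Set Filter Topology

lemma tendstoUniformlyOn_of_dist_le {ι α β : Type*} [PseudoMetricSpace β] {F : ι → α → β}
    {f : α → β} {l : Filter ι} {s : Set α} {g : ι → ℝ} (hg : Tendsto g l (𝓝 0))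
    (hFf : ∀ᶠ i in l, ∀ x ∈ s, dist (f x) (F i x) ≤ g i) :
    TendstoUniformlyOn F f l s := by
  rw [Metric.tendstoUniformlyOn_iff]
  intro δ hδ
  filter_upwards [hFf, hg.eventually (gt_mem_nhds hδ)] with i hi hgi x hx
  exact (hi x hx).trans_lt hgi

namespace ConcaveOn

variable {S : Set ℝ} {f f' : ℝ → ℝ}

lemma antitoneOn_of_hasDerivWithinAt_s12 (hfc : ConcaveOn ℝ S f)
    (hf' : ∀ x ∈ S, HasDerivWithinAt f (f' x) S x) : AntitoneOn f' S := by
  intro x hx y hy hxy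
  rcases eq_or_lt_of_le hxy with rfl | hxy'
  · rfl
  exact (hfc.le_slope_of_hasDerivWithinAt hx hy hxy' (hf' y hy)).trans
    (hfc.slope_le_of_hasDerivWithinAt hx hy hxy' (hf' x hx))

lemma le_add_mul_sub_of_hasDerivWithinAt (hfc : ConcaveOn ℝ S f) {x y d : ℝ} (hx : x ∈ S)
    (hy : y ∈ S) (hd : HasDerivWithinAt f d S x) : f y ≤ f x + d * (y - x) := by
  rcases lt_trichotomy x y with hxy | rfl | hyx
  · have h := hfc.slope_le_of_hasDerivWithinAt hx hy hxy hd
    rw [slope_def_field, div_le_iff₀ (sub_pos.mpr hxy)] at h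
    linarith
  · simp
  · have h := hfc.le_slope_of_hasDerivWithinAt hy hx hyx hd
    rw [slope_def_field, le_div_iff₀ (sub_pos.mpr hyx)] at h
    linarith

end ConcaveOn

/-- The function `ψ_ε` of the statement, with the junction point `z_ε` passed as `w`. -/
noncomputable def quadraticGlue (f : ℝ → ℝ) (ε w z : ℝ) : ℝ :=
  if z ≤ w then z ^ 2 / (2 * ε) else f z - f w + w ^ 2 / (2 * ε)

section quadraticGlue

variable {f : ℝ → ℝ} {ε w c z : ℝ}

lemma quadraticGlue_sub_of_le (hwz : w ≤ z) :
    quadraticGlue f ε w z - f z = w ^ 2 / (2 * ε) - f w := by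
  rcases eq_or_lt_of_le hwz with rfl | hwz'
  · simp [quadraticGlue]
  · simp only [quadraticGlue, if_neg (not_le.mpr hwz')]
    ring

lemma abs_quadraticGlue_sub_le_of_mem_Icc (hε : 0 < ε) (hwc : w ≤ ε * c)
    (hf : 0 ≤ f z ∧ f z ≤ c * z) (hz : z ∈ Icc 0 w) :
    |quadraticGlue f ε w z - f z| ≤ ε * c ^ 2 := by
  obtain ⟨hz0, hzw⟩ := hz
  have hc : 0 ≤ c := nonneg_of_mul_nonneg_right (hz0.trans hzw |>.trans hwc) hε
  have hfz : f z ≤ ε * c ^ 2 := by nlinarith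
  have hquad : z ^ 2 / (2 * ε) ≤ ε * c ^ 2 := by
    rw [div_le_iff₀ (by positivity)]
    nlinarith
  have hquad0 : 0 ≤ z ^ 2 / (2 * ε) := by positivity
  rw [quadraticGlue, if_pos hzw, abs_le]
  constructor <;> linarith [hf.1]

lemma abs_quadraticGlue_sub_le (hε : 0 < ε) (hw : 0 ≤ w) (hwc : w ≤ ε * c)
    (hf : ∀ x ∈ Icc 0 w, 0 ≤ f x ∧ f x ≤ c * x) (hz : 0 ≤ z) :
    |quadraticGlue f ε w z - f z| ≤ ε * c ^ 2 := by
  rcases le_total z w with hzw | hwz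
  · exact abs_quadraticGlue_sub_le_of_mem_Icc hε hwc (hf z ⟨hz, hzw⟩) ⟨hz, hzw⟩
  · have hw' : w ∈ Icc 0 w := ⟨hw, le_rfl⟩
    rw [quadraticGlue_sub_of_le hwz, ← quadraticGlue_sub_of_le le_rfl]
    exact abs_quadraticGlue_sub_le_of_mem_Icc hε hwc (hf w hw') hw'

end quadraticGlue

theorem stmt_12_general (ψ ψd : ℝ → ℝ)
    (hψmap : ∀ z ∈ Ici (0:ℝ), 0 ≤ ψ z)
    (hconc : ConcaveOn ℝ (Ici (0:ℝ)) ψ)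
    (hd1 : ∀ z ∈ Ici (0:ℝ), HasDerivWithinAt ψ (ψd z) (Ici (0:ℝ)) z)
    (hψ0 : ψ 0 = 0)
    (zfun : ℝ → ℝ)
    (hz : ∀ ε > (0:ℝ), 0 < zfun ε ∧ ε * ψd (zfun ε) = zfun ε ∧
      ∀ z : ℝ, 0 ≤ z → ε * ψd z = z → z = zfun ε)
    (Ψ : ℝ → ℝ → ℝ)
    (hΨ : ∀ ε > (0:ℝ), ∀ z ∈ Ici (0:ℝ),
      Ψ ε z = if z ≤ zfun ε then z^2 / (2*ε)
        else ψ z - ψ (zfun ε) + (zfun ε)^2 / (2*ε)) :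
    TendstoUniformlyOn Ψ ψ (𝓝[>] 0) (Ici (0:ℝ)) := by
  have htangent : ∀ z ∈ Ici (0:ℝ), ψ z ≤ ψd 0 * z := fun z hz0 => by
    simpa [hψ0] using
      hconc.le_add_mul_sub_of_hasDerivWithinAt self_mem_Ici hz0 (hd1 0 self_mem_Ici)
  have hanti := hconc.antitoneOn_of_hasDerivWithinAt_s12 hd1
  have hlim : Tendsto (fun ε => ε * ψd 0 ^ 2) (𝓝[>] 0) (𝓝 0) := by
    simpa using ((continuous_mul_const (ψd 0 ^ 2)).tendsto 0).mono_left nhdsWithin_le_nhds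
  refine tendstoUniformlyOn_of_dist_le hlim ?_
  filter_upwards [self_mem_nhdsWithin] with ε (hε : 0 < ε) z (hz0 : 0 ≤ z)
  obtain ⟨hw, hfix, -⟩ := hz ε hε
  have hwc : zfun ε ≤ ε * ψd 0 :=
    calc zfun ε = ε * ψd (zfun ε) := hfix.symm
      _ ≤ ε * ψd 0 := mul_le_mul_of_nonneg_left (hanti self_mem_Ici hw.le hw.le) hε.le
  have hbound := abs_quadraticGlue_sub_le (f := ψ) hε hw.le hwc
    (fun x hx => ⟨hψmap x hx.1, htangent x hx.1⟩) hz0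
  rw [dist_comm, Real.dist_eq, hΨ ε hε z hz0]
  exact hbound

/-- the regularized functions `ψ_ε` converge to `ψ` uniformly on `[0,∞)`
as `ε → 0⁺`. -/
theorem stmt_12 (ψ ψd ψdd : ℝ → ℝ) (lam : ℝ) (hlam : 0 < lam)
    (hψmap : ∀ z ∈ Ici (0:ℝ), 0 ≤ ψ z)
    (hmono : StrictMonoOn ψ (Ici (0:ℝ)))
    (hbdd : BddAbove (ψ '' Ici (0:ℝ)))
    (hconc : ConcaveOn ℝ (Ici (0:ℝ)) ψ)
    (hd1 : ∀ z ∈ Ici (0:ℝ), HasDerivWithinAt ψ (ψd z) (Ici (0:ℝ)) z)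
    (hd2 : ∀ z ∈ Ici (0:ℝ), HasDerivWithinAt ψd (ψdd z) (Ici (0:ℝ)) z)
    (hd2cont : ContinuousOn ψdd (Ici (0:ℝ)))
    (hψ0 : ψ 0 = 0) (hψd0 : 0 < ψd 0)
    (hlow : ∀ z ∈ Ici (0:ℝ), -lam ≤ ψdd z)
    (zfun : ℝ → ℝ)
    (hz : ∀ ε > (0:ℝ), 0 < zfun ε ∧ ε * ψd (zfun ε) = zfun ε ∧
      ∀ z : ℝ, 0 ≤ z → ε * ψd z = z → z = zfun ε)
    (Ψ : ℝ → ℝ → ℝ)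
    (hΨ : ∀ ε > (0:ℝ), ∀ z ∈ Ici (0:ℝ),
      Ψ ε z = if z ≤ zfun ε then z^2 / (2*ε)
        else ψ z - ψ (zfun ε) + (zfun ε)^2 / (2*ε)) :
    TendstoUniformlyOn Ψ ψ (𝓝[>] 0) (Ici (0:ℝ)) :=
  stmt_12_general ψ ψd hψmap hconc hd1 hψ0 zfun hz Ψ hΨ
end

section
/- (Helly-type selection theorem.) Let Ω ⊆ ℝⁿ be open, T > 0, and let {f_n}_{n∈ℕ} be a sequence of nondecreasing functions from [0,T] to C⁰(Ω) such that: (a) the families {f_n(0)}_{n∈ℕ} and {f_n(T)}_{n∈ℕ} are locally equibounded; (b) the family {f_n(t)}_{n∈ℕ, t∈[0,T]} is locally equicontinuous, uniformly with respect to t ∈ [0,T]. Then there exist a subsequence (not relabelled) and a nondecreasing function f : [0,T] → C⁰(Ω) such that for every t ∈ [0,T] the functions f_n(t) converge to f(t) locally uniformly on Ω as n → +∞. Moreover, for every t ∈ [0,T] the one-sided limits f⁺(t) and f⁻(t), which are pointwise well defined by monotonicity, belong to C⁰(Ω), and f(t+h) converges to f^±(t) locally uniformly in Ω as h → 0^±.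 -/
set_option autoImplicit false

open Set Filter Topology

/-!
Helly's selection theorem at the points of a countable dense set `E ⊆ Ω`: a diagonal extraction
makes `f m t x` converge for rational `t` and `x ∈ E`; the limits extend to monotone functions of
`t`, whose countably many discontinuity times are handled by a second extraction, and at every
other time `f m t x` is squeezed between its values at nearby rational times. Equicontinuity then
carries convergence from `E` to all of `Ω` and, by Ascoli, makes it uniform on compact sets; the
limits inherit continuity and equicontinuity. Extending the limit `g` constantly outside `[0, T]`
makes every `t ↦ g t x` monotone on `ℝ`, so its one-sided limits exist, and equicontinuity makes
these limits locally uniform as well.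
-/

theorem exists_subseq_forall_tendsto_of_bounded {ι : Type*} [Countable ι] (u : ℕ → ι → ℝ)
    (hu : ∀ i, ∃ C, ∀ m, |u m i| ≤ C) :
    ∃ φ : ℕ → ℕ, StrictMono φ ∧ ∀ i, ∃ L, Tendsto (fun m => u (φ m) i) atTop (𝓝 L) := by
  choose C hC using hu
  have hK : IsCompact (univ.pi fun i => Icc (-C i) (C i)) :=
    isCompact_univ_pi fun _ => isCompact_Icc
  obtain ⟨L, -, φ, hφ, hL⟩ := hK.isSeqCompact fun m i _ => abs_le.1 (hC i m)
  exact ⟨φ, hφ, fun i => ⟨L i, (continuous_apply i).continuousAt.tendsto.comp hL⟩⟩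

theorem frequently_nhdsLT_mem_Icc_ratCast {a b t : ℝ} (ht : t ∈ Ioc a b) :
    ∃ᶠ s in 𝓝[<] t, s ∈ Icc a b ∩ range ((↑) : ℚ → ℝ) := by
  refine frequently_nhdsWithin_iff.2 (mem_closure_iff_frequently.1 ?_)
  have hsub : Ioo a t ∩ range ((↑) : ℚ → ℝ) ⊆ (Icc a b ∩ range ((↑) : ℚ → ℝ)) ∩ Iio t :=
    fun s ⟨hs, hq⟩ => ⟨⟨Ioo_subset_Icc_self.trans (Icc_subset_Icc_right ht.2) hs, hq⟩, hs.2⟩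
  refine closure_mono hsub ?_
  have := closure_mono (Rat.denseRange_cast.open_subset_closure_inter isOpen_Ioo (t := Ioo a t))
  rw [closure_closure, closure_Ioo ht.1.ne] at this
  exact this ⟨ht.1.le, le_rfl⟩

theorem frequently_nhdsGT_mem_Icc_ratCast {a b t : ℝ} (ht : t ∈ Ico a b) :
    ∃ᶠ s in 𝓝[>] t, s ∈ Icc a b ∩ range ((↑) : ℚ → ℝ) := by
  refine frequently_nhdsWithin_iff.2 (mem_closure_iff_frequently.1 ?_)
  have hsub : Ioo t b ∩ range ((↑) : ℚ → ℝ) ⊆ (Icc a b ∩ range ((↑) : ℚ → ℝ)) ∩ Ioi t :=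
    fun s ⟨hs, hq⟩ => ⟨⟨Ioo_subset_Icc_self.trans (Icc_subset_Icc_left ht.1) hs, hq⟩, hs.1⟩
  refine closure_mono hsub ?_
  have := closure_mono (Rat.denseRange_cast.open_subset_closure_inter isOpen_Ioo (t := Ioo t b))
  rw [closure_closure, closure_Ioo ht.2.ne] at this
  exact this ⟨le_rfl, ht.2.le⟩

theorem tendsto_of_monotoneOn_of_continuousAt {s D : Set ℝ} {u : ℕ → ℝ → ℝ} {H : ℝ → ℝ} {t : ℝ}
    (hu : ∀ m, MonotoneOn (u m) s) (hDs : D ⊆ s)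
    (hD : ∀ r ∈ D, Tendsto (fun m => u m r) atTop (𝓝 (H r))) (ht : t ∈ s)
    (hH : ContinuousAt H t) (hl : ∃ᶠ r in 𝓝[<] t, r ∈ D) (hr : ∃ᶠ r in 𝓝[>] t, r ∈ D) :
    Tendsto (fun m => u m t) atTop (𝓝 (H t)) := by
  refine tendsto_order.2 ⟨fun c hc => ?_, fun c hc => ?_⟩
  · obtain ⟨r, hrD, hrt, hcr⟩ := (hl.and_eventually (eventually_mem_nhdsWithin.and
      (nhdsWithin_le_nhds (hH.eventually (lt_mem_nhds hc))))).exists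
    filter_upwards [(hD r hrD).eventually (lt_mem_nhds hcr)] with m hm
    exact hm.trans_le (hu m (hDs hrD) ht (le_of_lt hrt))
  · obtain ⟨r, hrD, hrt, hcr⟩ := (hr.and_eventually (eventually_mem_nhdsWithin.and
      (nhdsWithin_le_nhds (hH.eventually (gt_mem_nhds hc))))).exists
    filter_upwards [(hD r hrD).eventually (gt_mem_nhds hcr)] with m hm
    exact (hu m ht (hDs hrD) (le_of_lt hrt)).trans_lt hm

theorem exists_subseq_forall_tendsto_of_monotoneOn {ι : Type*} [Countable ι] {a b : ℝ}
    (u : ℕ → ι → ℝ → ℝ) (hu : ∀ m i, MonotoneOn (u m i) (Icc a b))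
    (hbdd : ∀ i, ∃ C, ∀ m, ∀ t ∈ Icc a b, |u m i t| ≤ C) :
    ∃ φ : ℕ → ℕ, StrictMono φ ∧
      ∀ i, ∀ t ∈ Icc a b, ∃ L, Tendsto (fun m => u (φ m) i t) atTop (𝓝 L) := by
  choose C hC using hbdd
  set D := Icc a b ∩ range ((↑) : ℚ → ℝ)
  have hDc : D.Countable := (countable_range _).mono inter_subset_right
  have := hDc.to_subtype
  obtain ⟨φ₁, hφ₁, hlim₁⟩ := exists_subseq_forall_tendsto_of_bounded
    (fun m (p : ι × D) => u m p.1 p.2) fun p => ⟨C p.1, fun m => hC p.1 m p.2 p.2.2.1⟩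
  choose! h hh using fun i (s : ℝ) (hs : s ∈ D) => hlim₁ (i, ⟨s, hs⟩)
  have hH : ∀ i, ∃ H : ℝ → ℝ, Monotone H ∧ EqOn (h i) H D := by
    intro i
    have hbd : ∀ s ∈ D, |h i s| ≤ C i :=
      fun s hs => le_of_tendsto' (hh i s hs).abs fun m => hC i (φ₁ m) s hs.1
    refine MonotoneOn.exists_monotone_extension
      (fun s hs s' hs' hss' => le_of_tendsto_of_tendsto' (hh i s hs) (hh i s' hs')
        fun m => hu _ i hs.1 hs'.1 hss')
      ⟨-C i, ?_⟩ ⟨C i, ?_⟩ <;> rintro _ ⟨s, hs, rfl⟩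
    exacts [(abs_le.1 (hbd s hs)).1, (abs_le.1 (hbd s hs)).2]
  choose H hHmono hHeq using hH
  set N := Icc a b ∩ ({a, b} ∪ ⋃ i, {t | ¬ContinuousAt (H i) t})
  have hNc : N.Countable := ((countable_insert.2 (countable_singleton b)).union
      (countable_iUnion fun i => (hHmono i).countable_not_continuousAt)).mono inter_subset_right
  have := hNc.to_subtype
  obtain ⟨φ₂, hφ₂, hlim₂⟩ := exists_subseq_forall_tendsto_of_bounded
    (fun m (p : ι × N) => u (φ₁ m) p.1 p.2) fun p => ⟨C p.1, fun m => hC p.1 (φ₁ m) p.2 p.2.2.1⟩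
  refine ⟨φ₁ ∘ φ₂, hφ₁.comp hφ₂, fun i t ht => ?_⟩
  by_cases htN : t ∈ N
  · exact hlim₂ (i, ⟨t, htN⟩)
  obtain ⟨⟨hta, htb⟩, hcont⟩ : (t ≠ a ∧ t ≠ b) ∧ ∀ i, ContinuousAt (H i) t := by
    simpa [N, ht, not_or] using htN
  refine ⟨H i t, tendsto_of_monotoneOn_of_continuousAt (fun m => hu _ i) inter_subset_left
    (fun r hr => ?_) ht (hcont i)
    (frequently_nhdsLT_mem_Icc_ratCast ⟨lt_of_le_of_ne ht.1 (Ne.symm hta), ht.2⟩)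
    (frequently_nhdsGT_mem_Icc_ratCast ⟨ht.1, lt_of_le_of_ne ht.2 htb⟩)⟩
  rw [← hHeq i hr]
  exact (hh i r hr).comp hφ₂.tendsto_atTop

theorem EquicontinuousWithinAt.cauchySeq_of_mem_closure {X α : Type*} [TopologicalSpace X]
    [PseudoMetricSpace α] {F : ℕ → X → α} {S E : Set X} {x : X}
    (hF : EquicontinuousWithinAt F S x) (hES : E ⊆ S) (hE : ∀ y ∈ E, CauchySeq (F · y))
    (hx : x ∈ closure E) : CauchySeq (F · x) := by
  rw [Metric.cauchySeq_iff]
  intro ε hε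
  have := mem_closure_iff_nhdsWithin_neBot.1 hx
  obtain ⟨y, hyE, hxy⟩ := (eventually_mem_nhdsWithin.and
    ((hF _ (Metric.dist_mem_uniformity (by positivity : 0 < ε / 3))).filter_mono
      (nhdsWithin_mono _ hES))).exists
  obtain ⟨N, hN⟩ := Metric.cauchySeq_iff.1 (hE y hyE) (ε / 3) (by positivity)
  refine ⟨N, fun m hm n hn => ?_⟩
  calc dist (F m x) (F n x) ≤ dist (F m x) (F m y) + dist (F n x) (F n y) + dist (F m y) (F n y) :=
        dist_triangle4_right ..
    _ < ε / 3 + ε / 3 + ε / 3 := by gcongr <;> [exact hxy m; exact hxy n; exact hN m hm n hn]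
    _ = ε := by ring

theorem EquicontinuousWithinAt.of_tendsto {ι κ X α : Type*} [TopologicalSpace X] [UniformSpace α]
    {F : ι → X → α} {G : κ → X → α} {S : Set X} {x₀ : X} (l : κ → Filter ι) [∀ k, (l k).NeBot]
    (hF : EquicontinuousWithinAt F S x₀) (hx₀ : x₀ ∈ S)
    (hG : ∀ k, ∀ x ∈ S, Tendsto (F · x) (l k) (𝓝 (G k x))) :
    EquicontinuousWithinAt G S x₀ := by
  intro U hU
  obtain ⟨W, hW, hWclosed, hWU⟩ := mem_uniformity_isClosed hU
  filter_upwards [hF W hW, eventually_mem_nhdsWithin] with x hx hxS k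
  exact hWU (hWclosed.mem_of_tendsto ((hG k x₀ hx₀).prodMk_nhds (hG k x hxS))
    (Eventually.of_forall hx))

theorem EquicontinuousOn.of_tendsto {ι κ X α : Type*} [TopologicalSpace X] [UniformSpace α]
    {F : ι → X → α} {G : κ → X → α} {S : Set X} (l : κ → Filter ι) [∀ k, (l k).NeBot]
    (hF : EquicontinuousOn F S) (hG : ∀ k, ∀ x ∈ S, Tendsto (F · x) (l k) (𝓝 (G k x))) :
    EquicontinuousOn G S :=
  fun x hx => (hF x hx).of_tendsto l hx hG

theorem IsOpen.equicontinuousOn_of_isCompact {ι X α : Type*} [PseudoMetricSpace X]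
    [LocallyCompactSpace X] [PseudoMetricSpace α] {F : ι → X → α} {Ω : Set X} (hΩ : IsOpen Ω)
    (hF : ∀ K ⊆ Ω, IsCompact K → ∀ η > 0, ∃ δ > 0, ∀ i, ∀ x ∈ K, ∀ y ∈ K,
      dist x y ≤ δ → dist (F i x) (F i y) ≤ η) :
    EquicontinuousOn F Ω := by
  intro x₀ hx₀
  refine (?_ : EquicontinuousAt F x₀).equicontinuousWithinAt Ω
  obtain ⟨K, hK, hx₀K, hKΩ⟩ := exists_compact_subset hΩ hx₀
  rw [Metric.equicontinuousAt_iff_right]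
  intro ε hε
  obtain ⟨δ, hδ, hδK⟩ := hF K hKΩ hK (ε / 2) (half_pos hε)
  filter_upwards [mem_interior_iff_mem_nhds.1 hx₀K, Metric.closedBall_mem_nhds x₀ hδ]
    with y hyK hy i
  exact (hδK i x₀ (interior_subset hx₀K) y hyK
    (by simpa [dist_comm] using hy)).trans_lt (half_lt_self hε)

theorem EquicontinuousOn.tendstoUniformlyOn_of_tendsto {ι X α : Type*} [TopologicalSpace X]
    [UniformSpace α] {F : ι → X → α} {f : X → α} {K : Set X} {l : Filter ι}
    (hK : IsCompact K) (hF : EquicontinuousOn F K) (h : ∀ x ∈ K, Tendsto (F · x) l (𝓝 (f x))) :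
    TendstoUniformlyOn F f l K := by
  have := (EquicontinuousOn.tendsto_uniformOnFun_iff_pi' (𝔖 := {K}) (by simpa using hK)
    (by simpa using hF) l f).2 ?_
  · simpa [UniformOnFun.tendsto_iff_tendstoUniformlyOn, Function.comp_def] using this
  · rw [tendsto_pi_nhds]
    rintro ⟨x, hx⟩
    exact h x (by simpa using hx)

theorem exists_subseq_forall_tendsto_of_monotoneOn_of_equicontinuousOn {X : Type*}
    [PseudoMetricSpace X] [TopologicalSpace.SeparableSpace X] {Ω : Set X} {a b : ℝ}
    (f : ℕ → ℝ → X → ℝ) (hmono : ∀ m, ∀ x ∈ Ω, MonotoneOn (f m · x) (Icc a b))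
    (hbdd : ∀ x ∈ Ω, ∃ C, ∀ m, ∀ t ∈ Icc a b, |f m t x| ≤ C)
    (hF : ∀ t ∈ Icc a b, EquicontinuousOn (fun m => f m t) Ω) :
    ∃ φ : ℕ → ℕ, StrictMono φ ∧
      ∀ t ∈ Icc a b, ∀ x ∈ Ω, ∃ L, Tendsto (fun m => f (φ m) t x) atTop (𝓝 L) := by
  obtain ⟨E, hEΩ, hEc, hΩE⟩ :=
    (TopologicalSpace.IsSeparable.of_separableSpace Ω).exists_countable_dense_subset
  have := hEc.to_subtype
  obtain ⟨φ, hφ, hlim⟩ := exists_subseq_forall_tendsto_of_monotoneOn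
    (fun m (y : E) t => f m t y) (fun m y => hmono m y (hEΩ y.2)) fun y => hbdd y (hEΩ y.2)
  refine ⟨φ, hφ, fun t ht x hx => cauchySeq_tendsto_of_complete ?_⟩
  exact ((hF t ht).comp φ x hx).cauchySeq_of_mem_closure hEΩ
    (fun y hy => (hlim ⟨y, hy⟩ t ht).choose_spec.cauchySeq) (hΩE hx)

theorem MonotoneOn.abs_le_of_mem_Icc {u : ℝ → ℝ} {a b t C : ℝ} (hu : MonotoneOn u (Icc a b))
    (ht : t ∈ Icc a b) (ha : |u a| ≤ C) (hb : |u b| ≤ C) : |u t| ≤ C :=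
  abs_le.2 ⟨(abs_le.1 ha).1.trans (hu ⟨le_rfl, ht.1.trans ht.2⟩ ht ht.1),
    (hu ht ⟨ht.1.trans ht.2, le_rfl⟩ ht.2).trans (abs_le.1 hb).2⟩

theorem stmt_17_general (n : ℕ) (Ω : Set (EuclideanSpace ℝ (Fin n))) (hΩ : IsOpen Ω)
    (T : ℝ) (hT : 0 < T) (f : ℕ → ℝ → EuclideanSpace ℝ (Fin n) → ℝ)
    (hmono : ∀ m : ℕ, ∀ s t : ℝ, 0 ≤ s → s ≤ t → t ≤ T → ∀ x ∈ Ω, f m s x ≤ f m t x)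
    (hbound : ∀ K : Set (EuclideanSpace ℝ (Fin n)), K ⊆ Ω → IsCompact K →
      ∃ C : ℝ, ∀ m : ℕ, ∀ x ∈ K, |f m 0 x| ≤ C ∧ |f m T x| ≤ C)
    (hequi : ∀ K : Set (EuclideanSpace ℝ (Fin n)), K ⊆ Ω → IsCompact K →
      ∀ η > (0:ℝ), ∃ δ > (0:ℝ), ∀ m : ℕ, ∀ t ∈ Icc 0 T, ∀ x ∈ K, ∀ y ∈ K,
        dist x y ≤ δ → |f m t x - f m t y| ≤ η) :
    ∃ φ : ℕ → ℕ, StrictMono φ ∧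
    ∃ g : ℝ → EuclideanSpace ℝ (Fin n) → ℝ,
      (∀ t ∈ Icc 0 T, ContinuousOn (g t) Ω) ∧
      (∀ s t : ℝ, 0 ≤ s → s ≤ t → t ≤ T → ∀ x ∈ Ω, g s x ≤ g t x) ∧
      (∀ t ∈ Icc 0 T, ∀ K : Set (EuclideanSpace ℝ (Fin n)), K ⊆ Ω → IsCompact K →
        TendstoUniformlyOn (fun m => f (φ m) t) (g t) atTop K) ∧
      ∃ gp gm : ℝ → EuclideanSpace ℝ (Fin n) → ℝ,
        (∀ t ∈ Icc 0 T, ContinuousOn (gp t) Ω ∧ ContinuousOn (gm t) Ω) ∧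
        (∀ t ∈ Ico 0 T, ∀ K : Set (EuclideanSpace ℝ (Fin n)), K ⊆ Ω → IsCompact K →
          TendstoUniformlyOn (fun s => g s) (gp t) (𝓝[>] t) K) ∧
        (∀ t ∈ Ioc 0 T, ∀ K : Set (EuclideanSpace ℝ (Fin n)), K ⊆ Ω → IsCompact K →
          TendstoUniformlyOn (fun s => g s) (gm t) (𝓝[<] t) K) := by
  set F : ℕ × Icc 0 T → EuclideanSpace ℝ (Fin n) → ℝ := fun q => f q.1 q.2
  have hF : EquicontinuousOn F Ω := hΩ.equicontinuousOn_of_isCompact fun K hKΩ hK η hη =>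
    (hequi K hKΩ hK η hη).imp fun _ ⟨hδ, h⟩ => ⟨hδ, fun q => h q.1 q.2 q.2.2⟩
  have hmono' : ∀ m, ∀ x ∈ Ω, MonotoneOn (f m · x) (Icc 0 T) :=
    fun m x hx s hs t ht hst => hmono m s t hs.1 hst ht.2 x hx
  have hbdd : ∀ x ∈ Ω, ∃ C, ∀ m, ∀ t ∈ Icc 0 T, |f m t x| ≤ C := fun x hx =>
    (hbound {x} (singleton_subset_iff.2 hx) isCompact_singleton).imp fun _ hC m _ ht =>
      (hmono' m x hx).abs_le_of_mem_Icc ht (hC m x rfl).1 (hC m x rfl).2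
  have hFt : ∀ t ∈ Icc 0 T, EquicontinuousOn (fun m => f m t) Ω :=
    fun t ht => hF.comp fun m => (m, ⟨t, ht⟩)
  obtain ⟨φ, hφ, hlim⟩ :=
    exists_subseq_forall_tendsto_of_monotoneOn_of_equicontinuousOn f hmono' hbdd hFt
  -- `projIcc` extends the limit constantly outside `[0, T]`, so that `g · x` is monotone on `ℝ`.
  choose! g hg using fun s x (hx : x ∈ Ω) =>
    hlim (projIcc 0 T hT.le s) (projIcc 0 T hT.le s).2 x hx
  have hg' : ∀ t ∈ Icc 0 T, ∀ x ∈ Ω, Tendsto (fun m => f (φ m) t x) atTop (𝓝 (g t x)) := by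
    intro t ht x hx
    simpa [projIcc_of_mem _ ht] using hg t x hx
  have hgmono : ∀ x ∈ Ω, Monotone (g · x) := fun x hx s t hst =>
    le_of_tendsto_of_tendsto' (hg s x hx) (hg t x hx) fun m =>
      hmono' _ x hx (projIcc 0 T hT.le s).2 (projIcc 0 T hT.le t).2 (monotone_projIcc _ hst)
  have hgeq : EquicontinuousOn g Ω :=
    hF.of_tendsto (fun s => map (fun m => (φ m, projIcc 0 T hT.le s)) atTop)
      fun s x hx => tendsto_map'_iff.2 (hg s x hx)
  refine ⟨φ, hφ, g, fun t ht => ?_, fun s t _ hst _ x hx => hgmono x hx hst,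
    fun t ht K hKΩ hK => ?_, fun t x => Function.rightLim (g · x) t,
    fun t x => Function.leftLim (g · x) t,
    fun t _ => ⟨?_, ?_⟩, fun t _ K hKΩ hK => ?_, fun t _ K hKΩ hK => ?_⟩
  · exact Tendsto.continuousOn_of_equicontinuousOn (hg' t ht) ((hFt t ht).comp φ)
  · exact (((hFt t ht).comp φ).mono hKΩ).tendstoUniformlyOn_of_tendsto hK
      fun x hx => hg' t ht x (hKΩ hx)
  · exact Tendsto.continuousOn_of_equicontinuousOn
      (fun x hx => (hgmono x hx).tendsto_rightLim t) hgeq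
  · exact Tendsto.continuousOn_of_equicontinuousOn
      (fun x hx => (hgmono x hx).tendsto_leftLim t) hgeq
  · exact (hgeq.mono hKΩ).tendstoUniformlyOn_of_tendsto hK
      fun x hx => (hgmono x (hKΩ hx)).tendsto_rightLim t
  · exact (hgeq.mono hKΩ).tendstoUniformlyOn_of_tendsto hK
      fun x hx => (hgmono x (hKΩ hx)).tendsto_leftLim t

/-- Helly-type selection theorem: a sequence of nondecreasing maps
`[0,T] → C⁰(Ω)` which is locally equibounded at `t = 0, T` and locally equicontinuous
uniformly in `t` admits a subsequence converging locally uniformly at every time to a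
nondecreasing limit `g`; moreover the one-sided limits `g⁺(t)`, `g⁻(t)` are continuous
on `Ω` and `g(t+h) → g^±(t)` locally uniformly as `h → 0^±`. -/
theorem stmt_17 (n : ℕ) (Ω : Set (EuclideanSpace ℝ (Fin n))) (hΩ : IsOpen Ω)
    (T : ℝ) (hT : 0 < T) (f : ℕ → ℝ → EuclideanSpace ℝ (Fin n) → ℝ)
    (hcont : ∀ m : ℕ, ∀ t ∈ Icc 0 T, ContinuousOn (f m t) Ω)
    (hmono : ∀ m : ℕ, ∀ s t : ℝ, 0 ≤ s → s ≤ t → t ≤ T → ∀ x ∈ Ω, f m s x ≤ f m t x)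
    (hbound : ∀ K : Set (EuclideanSpace ℝ (Fin n)), K ⊆ Ω → IsCompact K →
      ∃ C : ℝ, ∀ m : ℕ, ∀ x ∈ K, |f m 0 x| ≤ C ∧ |f m T x| ≤ C)
    (hequi : ∀ K : Set (EuclideanSpace ℝ (Fin n)), K ⊆ Ω → IsCompact K →
      ∀ η > (0:ℝ), ∃ δ > (0:ℝ), ∀ m : ℕ, ∀ t ∈ Icc 0 T, ∀ x ∈ K, ∀ y ∈ K,
        dist x y ≤ δ → |f m t x - f m t y| ≤ η) :
    ∃ φ : ℕ → ℕ, StrictMono φ ∧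
    ∃ g : ℝ → EuclideanSpace ℝ (Fin n) → ℝ,
      (∀ t ∈ Icc 0 T, ContinuousOn (g t) Ω) ∧
      (∀ s t : ℝ, 0 ≤ s → s ≤ t → t ≤ T → ∀ x ∈ Ω, g s x ≤ g t x) ∧
      (∀ t ∈ Icc 0 T, ∀ K : Set (EuclideanSpace ℝ (Fin n)), K ⊆ Ω → IsCompact K →
        TendstoUniformlyOn (fun m => f (φ m) t) (g t) atTop K) ∧
      ∃ gp gm : ℝ → EuclideanSpace ℝ (Fin n) → ℝ,
        (∀ t ∈ Icc 0 T, ContinuousOn (gp t) Ω ∧ ContinuousOn (gm t) Ω) ∧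
        (∀ t ∈ Ico 0 T, ∀ K : Set (EuclideanSpace ℝ (Fin n)), K ⊆ Ω → IsCompact K →
          TendstoUniformlyOn (fun s => g s) (gp t) (𝓝[>] t) K) ∧
        (∀ t ∈ Ioc 0 T, ∀ K : Set (EuclideanSpace ℝ (Fin n)), K ⊆ Ω → IsCompact K →
          TendstoUniformlyOn (fun s => g s) (gm t) (𝓝[<] t) K) :=
  stmt_17_general n Ω hΩ T hT f hmono hbound hequi
end
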